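/- Let A, B, C be unital C*-algebras and ρ : A ⊗min B → C a unital (contractive) algebra homomorphism whose restriction to 1_A ⊗ B is a *-homomorphism. If q ∈ B is a projection such that 1_B - q is Murray–von Neumann subequivalent to q (i.e. there is a partial isometry s ∈ B with s*s = 1_B - q and ss* ≤ q), then for every x ∈ A ⊗ 1_B one has ‖ρ(x)‖ = ‖ρ(x · (1_A ⊗ q))‖. -/

import Mathlib

/-!
Since `s s⋆ ≤ q`, `q s = s`, hence `s⋆ q s = s⋆ s = 1 - q`. As `ρ` is a ⋆-homomorphism on `B`,
the image `P` of `q` is a projection commuting with `x = ρ (a ⊗ 1)`, and the image `u` of `s`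
satisfies `u⋆ P u = 1 - P`. Writing `z = x P`, this gives
`x⋆ x = z⋆ z + u⋆ (z⋆ z) u ≤ ‖z‖² (P + u⋆ P u) = ‖z‖²`, so `‖x‖ ≤ ‖x P‖`; the reverse
inequality holds because `‖P‖ ≤ 1`.
-/

theorem IsStarProjection.mul_eq_self_of_mul_star_le {E : Type*} [CStarAlgebra E]
    [PartialOrder E] [StarOrderedRing E] {e y : E} (he : IsStarProjection e)
    (hy : y * star y ≤ e) : e * y = y := by
  have hey : e * (y * star y) = y * star y :=
    (he.mul_right_and_mul_left_of_nonneg_of_le (mul_star_self_nonneg y) hy).2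
  have hzero : (1 - e) * y * star ((1 - e) * y) = 0 := by
    rw [star_mul, he.one_sub.isSelfAdjoint.star_eq, mul_assoc, ← mul_assoc y, ← hey,
      ← mul_assoc, ← mul_assoc, he.one_sub_mul_self, zero_mul, zero_mul]
  rw [CStarRing.mul_star_self_eq_zero_iff, sub_mul, one_mul, sub_eq_zero] at hzero
  exact hzero.symm

theorem IsStarProjection.star_mul_self_le_norm_sq_smul {E : Type*} [CStarAlgebra E]
    [PartialOrder E] [StarOrderedRing E] {z p : E} (hp : IsStarProjection p) (hz : z * p = z) :
    star z * z ≤ ‖z‖ ^ 2 • p := by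
  have hpz : p * star z = star z := by
    conv_lhs => rw [← hp.isSelfAdjoint.star_eq, ← star_mul, hz]
  have hconj := star_left_conjugate_le_conjugate
    (CStarAlgebra.star_mul_le_algebraMap_norm_sq (a := z)) p
  rwa [hp.isSelfAdjoint.star_eq, ← mul_assoc, hpz, mul_assoc, hz, ← Algebra.commutes, mul_assoc,
    hp.isIdempotentElem.eq, ← Algebra.smul_def] at hconj

theorem IsStarProjection.norm_mul_eq_of_commute {E : Type*} [CStarAlgebra E] {x p u : E}
    (hp : IsStarProjection p) (hu : star u * p * u = 1 - p) (hxp : Commute x p)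
    (hxu : Commute x u) (hxu' : Commute x (star u)) : ‖x * p‖ = ‖x‖ := by
  -- any order making `E` a star-ordered ring will do, and the spectral order is one
  let _ := CStarAlgebra.spectralOrder E
  let _ := CStarAlgebra.spectralOrderedRing E
  refine le_antisymm ((norm_mul_le _ _).trans (mul_le_of_le_one_right (norm_nonneg _)
    (hp.norm_le p))) ?_
  set z := x * p
  set y := star x * x
  have hxp' : Commute (star x) p := by simpa [hp.isSelfAdjoint.star_eq] using hxp.star_star
  have hyp : Commute y p := hxp'.mul_left hxp
  have hyu : Commute y (star u) := hxu.star_star.mul_left hxu'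
  have hzz : star z * z = y * p := by
    calc star z * z = p * y * p := by
          simp only [z, y, star_mul, hp.isSelfAdjoint.star_eq, mul_assoc]
      _ = y * p := by rw [← hyp.eq, mul_assoc, hp.isIdempotentElem.eq]
  have hdecomp : y = star z * z + star u * (star z * z) * u := by
    rw [hzz, ← mul_assoc, ← hyu.eq, mul_assoc y, mul_assoc y, hu,
      ← mul_add, add_sub_cancel, mul_one]
  have hbound := hp.star_mul_self_le_norm_sq_smul
    (show z * p = z by rw [mul_assoc, hp.isIdempotentElem.eq])
  have hle : y ≤ algebraMap ℝ E (‖z‖ ^ 2) := by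
    calc y = star z * z + star u * (star z * z) * u := hdecomp
      _ ≤ ‖z‖ ^ 2 • p + star u * (‖z‖ ^ 2 • p) * u :=
        add_le_add hbound (star_left_conjugate_le_conjugate hbound u)
      _ = algebraMap ℝ E (‖z‖ ^ 2) := by
        rw [mul_smul_comm, smul_mul_assoc, hu, ← smul_add, add_sub_cancel,
          Algebra.algebraMap_eq_smul_one]
  rw [← CStarAlgebra.norm_le_iff_le_algebraMap y (by positivity) (star_mul_self_nonneg x),
    CStarRing.norm_star_mul_self, ← sq] at hle
  exact le_of_sq_le_sq hle (norm_nonneg _)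

theorem stmt1_general {A B T C : Type*} [CStarAlgebra A] [CStarAlgebra B]
    [PartialOrder B] [StarOrderedRing B] [CStarAlgebra T] [CStarAlgebra C]
    (ιA : A →⋆ₐ[ℂ] T) (ιB : B →⋆ₐ[ℂ] T)
    (hcomm : ∀ a b, ιA a * ιB b = ιB b * ιA a)
    (ρ : T →ₐ[ℂ] C)
    (hρ_star : ∀ b : B, ρ (ιB (star b)) = star (ρ (ιB b)))
    (q : B) (hq_proj : IsIdempotentElem q) (hq_sa : star q = q)
    (s : B) (hs : star s * s = 1 - q) (hs' : s * star s ≤ q)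
    (a : A) :
    ‖ρ (ιA a)‖ = ‖ρ (ιA a * ιB q)‖ := by
  let φ : B →⋆ₐ[ℂ] C := { ρ.comp ιB.toAlgHom with map_star' := hρ_star }
  have hq : IsStarProjection q := ⟨hq_proj, hq_sa⟩
  have hsqs : star s * q * s = 1 - q := by
    rw [mul_assoc, hq.mul_eq_self_of_mul_star_le hs', hs]
  have hxφ : ∀ b, Commute (ρ (ιA a)) (φ b) := fun b => Commute.map (hcomm a b) ρ
  rw [map_mul]
  refine ((hq.map φ).norm_mul_eq_of_commute ?_ (hxφ q) (hxφ s) ?_).symm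
  · rw [← map_star, ← map_mul, ← map_mul, hsqs, map_sub, map_one]
  · simpa only [map_star] using hxφ (star s)

/-- Proposition 2.2 of the paper.  Since the minimal tensor product is
not available in Mathlib, the tensor product `A ⊗min B` is encoded by a unital
C*-algebra `T` together with unital *-homomorphisms `ιA : A → T`, `ιB : B → T` with
commuting ranges (the canonical inclusions `a ↦ a ⊗ 1`, `b ↦ 1 ⊗ b`).
Given a unital contractive algebra homomorphism `ρ : T → C` whose restriction to
`1_A ⊗ B` is a *-homomorphism, and a projection `q ∈ B` with `1 - q` Murray–von
Neumann subequivalent to `q`, then for every `x = a ⊗ 1 ∈ A ⊗ 1_B` we have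
`‖ρ x‖ = ‖ρ (x · (1_A ⊗ q))‖`. -/
theorem stmt1 {A B T C : Type*} [CStarAlgebra A] [CStarAlgebra B]
    [PartialOrder B] [StarOrderedRing B] [CStarAlgebra T] [CStarAlgebra C]
    (ιA : A →⋆ₐ[ℂ] T) (ιB : B →⋆ₐ[ℂ] T)
    (hcomm : ∀ a b, ιA a * ιB b = ιB b * ιA a)
    (ρ : T →ₐ[ℂ] C) (hρ_contr : ∀ y : T, ‖ρ y‖ ≤ ‖y‖)
    (hρ_star : ∀ b : B, ρ (ιB (star b)) = star (ρ (ιB b)))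
    (q : B) (hq_proj : IsIdempotentElem q) (hq_sa : star q = q)
    (s : B) (hs : star s * s = 1 - q) (hs' : s * star s ≤ q)
    (a : A) :
    ‖ρ (ιA a)‖ = ‖ρ (ιA a * ιB q)‖ :=
  stmt1_general ιA ιB hcomm ρ hρ_star q hq_proj hq_sa s hs hs' a
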